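/- For a real number $q$ with $q > 0$ and $q \ne 1$, and for all positive integers $n$ and $r$, $\sum_{\ell=1}^{n} q^{2n-2\ell}\, [\ell]_q\, H_{n-\ell}^{(r)}(q) = \frac{[n]_q [n+r]_q}{[r]_q [r+1]_q} H_n^{(r)}(q) - \binom{n+r}{r+1}_q \Bigl(\frac{q^{r-1}}{[r]_q} + \frac{q^{r}}{[r+1]_q} - \frac{q^{n+r-1}}{[n+r]_q}\Bigr)$. -/

import Mathlib

/-- The `q`-integer `[n]_q = (1 - q^n)/(1 - q)`. -/
noncomputable def qint (q : ℝ) (n : ℕ) : ℝ := (1 - q ^ n) / (1 - q)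

/-- The `q`-factorial `[n]_q! = [n]_q [n-1]_q ⋯ [1]_q`, with `[0]_q! = 1`. -/
noncomputable def qfact (q : ℝ) : ℕ → ℝ
  | 0 => 1
  | n + 1 => qint q (n + 1) * qfact q n

/-- The `q`-binomial coefficient `C(n,k)_q = [n]_q!/([k]_q! [n-k]_q!)`, equal to `0` for `k > n`. -/
noncomputable def qbinom (q : ℝ) (n k : ℕ) : ℝ :=
  if k ≤ n then qfact q n / (qfact q k * qfact q (n - k)) else 0

/-- The `q`-hyperharmonic numbers: `H_n^{(0)}(q) = 1/(q [n]_q)` and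
`H_n^{(r)}(q) = ∑_{j=1}^n q^j H_j^{(r-1)}(q)` for `r ≥ 1` (so `H_0^{(r)}(q) = 0`). -/
noncomputable def qhyp (q : ℝ) : ℕ → ℕ → ℝ
  | 0, n => 1 / (q * qint q n)
  | r + 1, n => ∑ j ∈ Finset.Icc 1 n, q ^ j * qhyp q r j

/-!
Unrolling the recursion twice gives `H_{n-1}^{(r+2)} = ∑_{m<n} q^{2m} [n-m]_q H_m^{(r)}`, which is
the left-hand side read backwards. Every `H^{(s+1)}` has the closed form
`H_n^{(s+1)} = C(n+s, s)_q (H_{n+s}^{(1)} - H_s^{(1)})` (induction on `s` and `n`, using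
q-Pascal and absorption). For `H_{n-1}^{(r+2)}` and `H_n^{(r)}` the binomial coefficients differ
by the factor `[n]_q [n+r]_q / ([r]_q [r+1]_q)`, and the harmonic parts differ by the three
boundary terms `q^{r-1}/[r]_q`, `q^r/[r+1]_q` and `q^{n+r-1}/[n+r]_q` of `H^{(1)}`.
-/

open Finset

variable {q : ℝ}

theorem qint_zero : qint q 0 = 0 := by simp [qint]

theorem qint_eq_sum_range (hq1 : q ≠ 1) (n : ℕ) : qint q n = ∑ i ∈ range n, q ^ i := by
  rw [geom_sum_eq hq1, qint, ← neg_div_neg_eq, neg_sub, neg_sub]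

theorem qint_pos (hq : 0 < q) (hq1 : q ≠ 1) {n : ℕ} (hn : n ≠ 0) : 0 < qint q n := by
  rw [qint_eq_sum_range hq1]
  exact sum_pos (fun i _ => pow_pos hq i) (nonempty_range_iff.2 hn)

theorem qint_add (hq1 : q ≠ 1) (a b : ℕ) : qint q (a + b) = qint q a + q ^ a * qint q b := by
  simp only [qint_eq_sum_range hq1, sum_range_add, pow_add, mul_sum]

theorem qint_succ (hq1 : q ≠ 1) (n : ℕ) : qint q (n + 1) = qint q n + q ^ n := by
  simp [qint_add hq1, qint_eq_sum_range hq1]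

theorem qfact_succ (n : ℕ) : qfact q (n + 1) = qint q (n + 1) * qfact q n := rfl

theorem qfact_pos (hq : 0 < q) (hq1 : q ≠ 1) (n : ℕ) : 0 < qfact q n := by
  induction n with
  | zero => exact one_pos
  | succ n ih => exact mul_pos (qint_pos hq hq1 n.succ_ne_zero) ih

theorem qbinom_add_eq_qfact_div (n s : ℕ) :
    qbinom q (n + s) s = qfact q (n + s) / (qfact q s * qfact q n) := by
  rw [qbinom, if_pos (Nat.le_add_left s n), Nat.add_sub_cancel]

theorem qbinom_zero_right (hq : 0 < q) (hq1 : q ≠ 1) (n : ℕ) : qbinom q n 0 = 1 := by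
  rw [qbinom, if_pos n.zero_le, Nat.sub_zero, qfact, one_mul, div_self (qfact_pos hq hq1 n).ne']

theorem qbinom_pascal (hq : 0 < q) (hq1 : q ≠ 1) (n s : ℕ) :
    qbinom q (n + 1 + (s + 1)) (s + 1) =
      qbinom q (n + (s + 1)) (s + 1) + q ^ (n + 1) * qbinom q (n + 1 + s) s := by
  have hF := qfact_pos hq hq1 (n + s + 1)
  have hs := qfact_pos hq hq1 s
  have hn := qfact_pos hq hq1 n
  have hs1 := qint_pos hq hq1 s.succ_ne_zero
  have hn1 := qint_pos hq hq1 n.succ_ne_zero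
  rw [qbinom_add_eq_qfact_div, qbinom_add_eq_qfact_div, qbinom_add_eq_qfact_div,
    show n + (s + 1) = n + s + 1 by omega, show n + 1 + s = n + s + 1 by omega,
    show n + 1 + (s + 1) = n + s + 1 + 1 by omega,
    qfact_succ (n + s + 1), show n + s + 1 + 1 = n + 1 + (s + 1) by omega,
    qint_add hq1 (n + 1) (s + 1), qfact_succ s, qfact_succ n]
  field_simp

theorem qbinom_succ_div_qint (hq : 0 < q) (hq1 : q ≠ 1) (n s : ℕ) :
    qbinom q (n + (s + 1)) (s + 1) / qint q (n + (s + 1)) =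
      qbinom q (n + s) s / qint q (s + 1) := by
  have hF := qfact_pos hq hq1 (n + s)
  have hs := qfact_pos hq hq1 s
  have hn := qfact_pos hq hq1 n
  have hs1 := qint_pos hq hq1 s.succ_ne_zero
  have hns1 := qint_pos hq hq1 (n + s).succ_ne_zero
  rw [qbinom_add_eq_qfact_div, qbinom_add_eq_qfact_div, ← add_assoc, qfact_succ, qfact_succ]
  field_simp

theorem qhyp_succ_zero (r : ℕ) : qhyp q (r + 1) 0 = 0 := by simp [qhyp]

theorem qhyp_succ_succ (r n : ℕ) :
    qhyp q (r + 1) (n + 1) = qhyp q (r + 1) n + q ^ (n + 1) * qhyp q r (n + 1) :=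
  sum_Icc_succ_top (Nat.le_add_left 1 n) _

theorem qhyp_one_succ (hq : q ≠ 0) (n : ℕ) :
    qhyp q 1 (n + 1) = qhyp q 1 n + q ^ n / qint q (n + 1) := by
  rw [qhyp_succ_succ, qhyp, pow_succ]
  field_simp

theorem qhyp_succ_eq_qbinom_mul (hq : 0 < q) (hq1 : q ≠ 1) (s n : ℕ) :
    qhyp q (s + 1) n = qbinom q (n + s) s * (qhyp q 1 (n + s) - qhyp q 1 s) := by
  induction s generalizing n with
  | zero => simp [qbinom_zero_right hq hq1, qhyp_succ_zero]
  | succ s ih =>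
    induction n with
    | zero => simp [qhyp_succ_zero]
    | succ n ihn =>
      have hpascal := qbinom_pascal hq hq1 n s
      have habsorb := qbinom_succ_div_qint hq hq1 (n + 1) s
      rw [qhyp_succ_succ, ihn, ih (n + 1)]
      simp only [show n + 1 + (s + 1) = n + s + 1 + 1 by omega,
        show n + (s + 1) = n + s + 1 by omega,
        show n + 1 + s = n + s + 1 by omega] at hpascal habsorb ⊢
      rw [qhyp_one_succ hq.ne' (n + s + 1), qhyp_one_succ hq.ne' s]
      -- Pascal splits the coefficient; by absorption the two new boundary terms cancel.
      linear_combination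
        (qhyp q 1 s + q ^ s / qint q (s + 1) - qhyp q 1 (n + s + 1)) * hpascal -
          q ^ (n + s + 1) * habsorb

theorem qbinom_add_two_eq_mul (hq : 0 < q) (hq1 : q ≠ 1) (n s : ℕ) :
    qbinom q (n + s + 2) (s + 2) =
      qint q (n + 1) * qint q (n + s + 2) / (qint q (s + 1) * qint q (s + 2)) *
        qbinom q (n + s + 1) s := by
  have hF := qfact_pos hq hq1 (n + s + 1)
  have hs := qfact_pos hq hq1 s
  have hn := qfact_pos hq hq1 n
  have hs1 := qint_pos hq hq1 s.succ_ne_zero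
  have hs2 := qint_pos hq hq1 (s + 1).succ_ne_zero
  have hn1 := qint_pos hq hq1 n.succ_ne_zero
  rw [show n + s + 2 = n + (s + 2) by omega, qbinom_add_eq_qfact_div,
    show n + s + 1 = n + 1 + s by omega, qbinom_add_eq_qfact_div,
    show n + (s + 2) = n + 1 + s + 1 by omega, qfact_succ (n + 1 + s), qfact_succ (s + 1),
    qfact_succ s, qfact_succ n]
  field_simp

theorem qhyp_add_two_eq_sum_range (r n : ℕ) :
    qhyp q (r + 2) n = ∑ m ∈ range (n + 1), q ^ m * qhyp q (r + 1) m := by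
  induction n with
  | zero => simp [qhyp_succ_zero]
  | succ n ih => rw [qhyp_succ_succ, ih, sum_range_succ _ (n + 1)]

theorem sum_range_qint_mul_qhyp (hq1 : q ≠ 1) (r n : ℕ) :
    ∑ m ∈ range (n + 1), q ^ (2 * m) * qint q (n + 1 - m) * qhyp q (r + 1) m =
      qhyp q (r + 3) n := by
  induction n with
  | zero => simp [qhyp_succ_zero]
  | succ n ih =>
    have hsplit : ∀ m ∈ range (n + 2), q ^ (2 * m) * qint q (n + 1 + 1 - m) * qhyp q (r + 1) m =
        q ^ (2 * m) * qint q (n + 1 - m) * qhyp q (r + 1) m +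
          q ^ (n + 1) * (q ^ m * qhyp q (r + 1) m) := by
      intro m hm
      have hm : m ≤ n + 1 := Nat.lt_succ_iff.1 (mem_range.1 hm)
      have hpow : q ^ (2 * m) * q ^ (n + 1 - m) = q ^ (n + 1) * q ^ m := by
        rw [← pow_add, ← pow_add]
        congr 1
        omega
      rw [show n + 1 + 1 - m = n + 1 - m + 1 by omega, qint_succ hq1]
      linear_combination qhyp q (r + 1) m * hpow
    rw [sum_congr rfl hsplit, sum_add_distrib, sum_range_succ _ (n + 1), ih, Nat.sub_self,
      qint_zero, ← mul_sum, ← qhyp_add_two_eq_sum_range, qhyp_succ_succ (r + 2) n]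
    ring

theorem sum_Icc_one_sub_eq_sum_range {M : Type*} [AddCommMonoid M] (f : ℕ → ℕ → M)
    (n : ℕ) :
    ∑ ℓ ∈ Icc 1 n, f ℓ (n - ℓ) = ∑ m ∈ range n, f (n - m) m := by
  refine sum_nbij' (n - ·) (n - ·) ?_ ?_ ?_ ?_ ?_ <;> intro a ha <;>
    simp only [mem_Icc, mem_range] at ha ⊢
  · omega
  · omega
  · omega
  · omega
  · rw [Nat.sub_sub_self ha.2]

theorem sum_backward_qint_mul_qhyp_general (q : ℝ) (hq : 0 < q) (hq1 : q ≠ 1) (n r : ℕ)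
    (hr : 1 ≤ r) :
    ∑ ℓ ∈ Finset.Icc 1 n, q ^ (2 * n - 2 * ℓ) * qint q ℓ * qhyp q r (n - ℓ) =
      qint q n * qint q (n + r) / (qint q r * qint q (r + 1)) * qhyp q r n -
        qbinom q (n + r) (r + 1) *
          (q ^ (r - 1) / qint q r + q ^ r / qint q (r + 1) -
            q ^ (n + r - 1) / qint q (n + r)) := by
  obtain ⟨R, rfl⟩ : ∃ R, r = R + 1 := ⟨r - 1, by omega⟩
  rcases n with _ | N
  · simp [qint_zero, qbinom]
  simp only [← Nat.mul_sub]
  rw [sum_Icc_one_sub_eq_sum_range (fun ℓ m => q ^ (2 * m) * qint q ℓ * qhyp q (R + 1) m),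
    sum_range_qint_mul_qhyp hq1, qhyp_succ_eq_qbinom_mul hq hq1 (R + 2),
    qhyp_succ_eq_qbinom_mul hq hq1 R]
  simp only [show N + (R + 2) = N + R + 2 by omega, show N + 1 + (R + 1) = N + R + 2 by omega,
    show N + 1 + R = N + R + 1 by omega, show R + 1 + 1 = R + 2 by omega,
    show N + R + 2 - 1 = N + R + 1 by omega, Nat.add_sub_cancel]
  rw [qbinom_add_two_eq_mul hq hq1, qhyp_one_succ hq.ne' (N + R + 1),
    qhyp_one_succ hq.ne' (R + 1), qhyp_one_succ hq.ne' R]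
  ring

/-- For `q > 0`, `q ≠ 1` and positive integers `n, r`,
`∑_{ℓ=1}^n q^{2n-2ℓ} [ℓ]_q H_{n-ℓ}^{(r)}(q)
   = ([n]_q [n+r]_q / ([r]_q [r+1]_q)) H_n^{(r)}(q)
     - C(n+r, r+1)_q (q^{r-1}/[r]_q + q^r/[r+1]_q - q^{n+r-1}/[n+r]_q)`. -/
theorem sum_backward_qint_mul_qhyp (q : ℝ) (hq : 0 < q) (hq1 : q ≠ 1) (n r : ℕ)
    (hn : 1 ≤ n) (hr : 1 ≤ r) :
    ∑ ℓ ∈ Finset.Icc 1 n, q ^ (2 * n - 2 * ℓ) * qint q ℓ * qhyp q r (n - ℓ) =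
      qint q n * qint q (n + r) / (qint q r * qint q (r + 1)) * qhyp q r n -
        qbinom q (n + r) (r + 1) *
          (q ^ (r - 1) / qint q r + q ^ r / qint q (r + 1) -
            q ^ (n + r - 1) / qint q (n + r)) :=
  sum_backward_qint_mul_qhyp_general q hq hq1 n r hr
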